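/- Consider n vectors x₁,…,xₙ ∈ ℝ^d with f < n/2, and let S ⊆ [n] with |S| = n−f. Suppose q ≤ n−f and let M(q) be the set of q indices with the smallest Multi-Krum* scores. Then for any k ∈ M(q) and any l ∈ S, ‖x_k − x_l‖ ≤ (1 + √((n−f)/(n−2f))) · max_{i,j∈S} ‖xᵢ − xⱼ‖. -/

import Mathlib

/-- Diameter of the family `x` over the index set `S`. -/
noncomputable def diam {n d : ℕ} (x : Fin n → EuclideanSpace ℝ (Fin d))
    (S : Finset (Fin n)) : ℝ :=
  (((S ×ˢ S).sup fun p => ‖x p.1 - x p.2‖₊ : NNReal) : ℝ)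

lemma le_diam {n d : ℕ} (x : Fin n → EuclideanSpace ℝ (Fin d))
    (S : Finset (Fin n)) {i j : Fin n} (hi : i ∈ S) (hj : j ∈ S) :
    ‖x i - x j‖ ≤ diam x S := by
  let F : Fin n × Fin n → NNReal := fun p => ‖x p.1 - x p.2‖₊
  have h : F (i, j) ≤ (S ×ˢ S).sup F := Finset.le_sup (Finset.mem_product.mpr ⟨hi, hj⟩)
  exact NNReal.coe_le_coe.mpr h

lemma diam_nonneg {n d : ℕ} (x : Fin n → EuclideanSpace ℝ (Fin d))
    (S : Finset (Fin n)) : 0 ≤ diam x S := NNReal.coe_nonneg _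

/-- Any selected Multi-Krum* vector is within `(1 + √((n-f)/(n-2f)))` diameters of `S`. -/
theorem multikrum_selected_close (n f q d : ℕ) (hfn : 2 * f < n) (hq : q ≤ n - f)
    (x : Fin n → EuclideanSpace ℝ (Fin d))
    (C : Fin n → Finset (Fin n))
    (hCi : ∀ i, i ∉ C i) (hCcard : ∀ i, (C i).card = n - f - 1)
    (hCclose : ∀ i : Fin n, ∀ j ∈ C i, ∀ l : Fin n, l ∉ C i → l ≠ i →
      ‖x i - x j‖ ≤ ‖x i - x l‖)
    (M : Finset (Fin n)) (hM : M.card = q)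
    (hMmin : ∀ i ∈ M, ∀ j : Fin n, j ∉ M →
      (∑ j' ∈ C i, ‖x i - x j'‖ ^ 2) ≤ ∑ j' ∈ C j, ‖x j - x j'‖ ^ 2)
    (S : Finset (Fin n)) (hS : S.card = n - f) :
    ∀ k ∈ M, ∀ l ∈ S, ‖x k - x l‖ ≤
      (1 + Real.sqrt (((n : ℝ) - f) / ((n : ℝ) - 2 * f))) * diam x S := by
  intro k hk l hl
  set D := diam x S with hD
  have hD0 : 0 ≤ D := diam_nonneg x S
  set c : ℝ := ((n : ℝ) - f) / ((n : ℝ) - 2 * f) with hc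
  have hsq0 : 0 ≤ Real.sqrt c := Real.sqrt_nonneg _
  have hfn' : (2 * (f : ℝ)) < n := by exact_mod_cast hfn
  have hden : (0 : ℝ) < (n : ℝ) - 2 * f := by linarith
  have hf0 : (0:ℝ) ≤ f := Nat.cast_nonneg f
  have hc0 : 0 ≤ c := div_nonneg (by linarith) hden.le
  by_cases hkS : k ∈ S
  · have h1 : ‖x k - x l‖ ≤ D := le_diam x S hkS hl
    nlinarith [mul_nonneg hsq0 hD0]
  · -- find j ∈ S \ M
    obtain ⟨j, hjS, hjM⟩ : ∃ j ∈ S, j ∉ M := by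
      by_contra h
      push_neg at h
      have hsub : insert k S ⊆ M := by
        intro a ha
        rcases Finset.mem_insert.mp ha with rfl | ha
        · exact hk
        · exact h a ha
      have := Finset.card_le_card hsub
      rw [Finset.card_insert_of_notMem hkS, hS, hM] at this
      omega
    -- score(j) ≤ (n - f - 1) * D^2
    have hterm : ∀ j' ∈ C j, ‖x j - x j'‖ ^ 2 ≤ D ^ 2 := by
      intro j' hj'
      have hle : ‖x j - x j'‖ ≤ D := by
        by_cases hj'S : j' ∈ S
        · exact le_diam x S hjS hj'S
        · obtain ⟨l', hl'S, hl'ne, hl'C⟩ : ∃ l' ∈ S, l' ≠ j ∧ l' ∉ C j := by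
            by_contra h
            push_neg at h
            have hsub : S.erase j ⊆ C j := by
              intro a ha
              exact h a (Finset.mem_of_mem_erase ha) (Finset.ne_of_mem_erase ha)
            have hcard : (C j).card ≤ (S.erase j).card := by
              rw [Finset.card_erase_of_mem hjS, hS, hCcard]
            have heq : S.erase j = C j :=
              Finset.eq_of_subset_of_card_le hsub hcard
            have : j' ∈ S.erase j := heq ▸ hj'
            exact hj'S (Finset.mem_of_mem_erase this)
          have h1 : ‖x j - x j'‖ ≤ ‖x j - x l'‖ := hCclose j j' hj' l' hl'C hl'ne
          exact h1.trans (le_diam x S hjS hl'S)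
      have h0 : 0 ≤ ‖x j - x j'‖ := norm_nonneg _
      nlinarith
    have hscorej : (∑ j' ∈ C j, ‖x j - x j'‖ ^ 2) ≤ ((n : ℝ) - f) * D ^ 2 := by
      have h1 : (∑ j' ∈ C j, ‖x j - x j'‖ ^ 2) ≤ (C j).card • (D ^ 2) :=
        Finset.sum_le_card_nsmul _ _ _ hterm
      rw [hCcard j, nsmul_eq_mul] at h1
      have h2 : ((n - f - 1 : ℕ) : ℝ) ≤ (n : ℝ) - f := by
        have hfle : f ≤ n := by omega
        
        have : ((n - f - 1 : ℕ) : ℝ) ≤ ((n - f : ℕ) : ℝ) := by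
          exact_mod_cast Nat.sub_le _ _
        rw [Nat.cast_sub hfle] at this
        linarith
      nlinarith [sq_nonneg D]
    have hscorek := hMmin k hk j hjM
    -- C k ∩ S is large
    have hinter : n - 2 * f ≤ (C k ∩ S).card := by
      have hsub : C k ∪ S ⊆ Finset.univ.erase k := by
        intro a ha
        rcases Finset.mem_union.mp ha with ha | ha
        · exact Finset.mem_erase.mpr ⟨fun h => hCi k (h ▸ ha), Finset.mem_univ a⟩
        · exact Finset.mem_erase.mpr ⟨fun h => hkS (h ▸ ha), Finset.mem_univ a⟩
      have h1 := Finset.card_le_card hsub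
      rw [Finset.card_erase_of_mem (Finset.mem_univ k), Finset.card_univ,
        Fintype.card_fin] at h1
      have h2 := Finset.card_union_add_card_inter (C k) S
      rw [hCcard k, hS] at h2
      omega
    have hne : (C k ∩ S).Nonempty := by
      rw [← Finset.card_pos]; omega
    obtain ⟨j0, hj0, hj0min⟩ :=
      Finset.exists_min_image (C k ∩ S) (fun j' => ‖x k - x j'‖) hne
    -- lower bound the score of k
    have hlow : ((n : ℝ) - 2 * f) * ‖x k - x j0‖ ^ 2 ≤ ∑ j' ∈ C k, ‖x k - x j'‖ ^ 2 := by
      have h1 : (C k ∩ S).card • (‖x k - x j0‖ ^ 2) ≤ ∑ j' ∈ C k ∩ S, ‖x k - x j'‖ ^ 2 := by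
        apply Finset.card_nsmul_le_sum
        intro j' hj'
        have := hj0min j' hj'
        have h0 : 0 ≤ ‖x k - x j0‖ := norm_nonneg _
        nlinarith
      have h2 : (∑ j' ∈ C k ∩ S, ‖x k - x j'‖ ^ 2) ≤ ∑ j' ∈ C k, ‖x k - x j'‖ ^ 2 := by
        apply Finset.sum_le_sum_of_subset_of_nonneg Finset.inter_subset_left
        intro i _ _; positivity
      have h3 : ((n : ℝ) - 2 * f) ≤ ((C k ∩ S).card : ℝ) := by
        have : ((n - 2 * f : ℕ) : ℝ) ≤ ((C k ∩ S).card : ℝ) := by exact_mod_cast hinter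
        rw [Nat.cast_sub (by omega : 2 * f ≤ n)] at this
        push_cast at this
        linarith
      calc ((n : ℝ) - 2 * f) * ‖x k - x j0‖ ^ 2
          ≤ ((C k ∩ S).card : ℝ) * ‖x k - x j0‖ ^ 2 := by
            have : (0:ℝ) ≤ ‖x k - x j0‖ ^ 2 := by positivity
            nlinarith
        _ ≤ ∑ j' ∈ C k ∩ S, ‖x k - x j'‖ ^ 2 := by
            rw [← nsmul_eq_mul]; exact h1
        _ ≤ _ := h2
    have hkey : ‖x k - x j0‖ ^ 2 ≤ c * D ^ 2 := by
      rw [hc, div_mul_eq_mul_div, le_div_iff₀ hden]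
      nlinarith
    have hkj0 : ‖x k - x j0‖ ≤ Real.sqrt c * D := by
      have h1 : ‖x k - x j0‖ ≤ Real.sqrt (c * D ^ 2) := by
        have := Real.sqrt_le_sqrt hkey
        rwa [Real.sqrt_sq (norm_nonneg _)] at this
      rwa [Real.sqrt_mul hc0, Real.sqrt_sq hD0] at h1
    have hj0S : j0 ∈ S := (Finset.mem_inter.mp hj0).2
    have htri : ‖x k - x l‖ ≤ ‖x k - x j0‖ + ‖x j0 - x l‖ := by
      have := dist_triangle (x k) (x j0) (x l)
      simpa [dist_eq_norm] using this
    have h2 : ‖x j0 - x l‖ ≤ D := le_diam x S hj0S hl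
    nlinarith
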